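/- Let V and W be normed spaces and let T = T_1 + T_2 : V → W be a bounded surjective linear map, where T_1, T_2 : V → W are bounded and the ranges of T_1 and T_2 lie in closed complementary subspaces W_1 and W_2 of W (W = W_1 ⊕ W_2). Then for every x in V there exists y in ker(T_2) such that T_1(x − y) = 0 and T_1(y) = T_1(x); in particular V = ker(T_1) + ker(T_2). -/
import Mathlib

/-- if `T = T₁ + T₂` is a bounded surjective map between normed
spaces with `T₁, T₂` valued in closed complementary subspaces `W₁, W₂`, then
every `x` admits `y ∈ ker T₂` with `T₁(x - y) = 0` and `T₁ y = T₁ x`; in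
particular `V = ker T₁ + ker T₂`. -/
theorem stmt9 {V W : Type*}
    [NormedAddCommGroup V] [NormedSpace ℂ V]
    [NormedAddCommGroup W] [NormedSpace ℂ W]
    (T₁ T₂ : V →L[ℂ] W) (W₁ W₂ : Submodule ℂ W)
    (hc₁ : IsClosed (W₁ : Set W)) (hc₂ : IsClosed (W₂ : Set W))
    (hinf : W₁ ⊓ W₂ = ⊥) (hsup : W₁ ⊔ W₂ = ⊤)
    (hr₁ : ∀ x, T₁ x ∈ W₁) (hr₂ : ∀ x, T₂ x ∈ W₂)
    (hsurj : Function.Surjective fun x => T₁ x + T₂ x) :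
    ∀ x : V, ∃ y : V, T₂ y = 0 ∧ T₁ (x - y) = 0 ∧ T₁ y = T₁ x := by
  intro x
  obtain ⟨y, hy⟩ := hsurj (T₁ x)
  simp only at hy
  have h2 : T₂ y ∈ W₁ ⊓ W₂ := by
    refine ⟨?_, hr₂ y⟩
    have h : T₂ y = T₁ x - T₁ y := by
      rw [eq_sub_iff_add_eq, add_comm]; exact hy
    rw [h]
    exact W₁.sub_mem (hr₁ x) (hr₁ y)
  rw [hinf] at h2
  have hT2 : T₂ y = 0 := h2
  have hT1 : T₁ y = T₁ x := by rw [hT2, add_zero] at hy; exact hy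
  exact ⟨y, hT2, by rw [map_sub, hT1, sub_self], hT1⟩
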